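/- Let S ⊆ Dic(A,y) with 1 ∉ S and S⁻¹ = S, written S = S₁ ∪ xS₂ with S₁, S₂ ⊆ A. Then the following are equivalent: (1) S₁ ∈ B(A) and S₂ ∈ B(A); (2) Cay(Dic(A,y), S) is integral and S₂⁻¹ = S₂. -/

import Mathlib

open scoped Classical Pointwise

/-- The generalized dicyclic group `Dic(A, y)` where `y : A` satisfies `y * y = 1`.
The element `⟨t, a⟩` represents `x^t * a`, where `x` is the extra generator with
`x ^ 2 = y` and `x * a * x⁻¹ = a⁻¹` for all `a ∈ A`. -/
@[ext]
structure Dic (A : Type*) [CommGroup A] (y : A) (hy : y * y = 1) where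
  t : Bool
  a : A

namespace Dic

variable {A : Type*} [CommGroup A] {y : A} {hy : y * y = 1}

instance : Mul (Dic A y hy) :=
  ⟨fun g h => ⟨xor g.t h.t, (if h.t then g.a⁻¹ else g.a) * h.a * (if g.t && h.t then y else 1)⟩⟩

instance : One (Dic A y hy) := ⟨⟨false, 1⟩⟩

instance : Inv (Dic A y hy) := ⟨fun g => ⟨g.t, if g.t then y * g.a else g.a⁻¹⟩⟩

@[simp] lemma mul_t (g h : Dic A y hy) : (g * h).t = xor g.t h.t := rfl
@[simp] lemma mul_a (g h : Dic A y hy) :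
    (g * h).a = (if h.t then g.a⁻¹ else g.a) * h.a * (if g.t && h.t then y else 1) := rfl
@[simp] lemma one_t : (1 : Dic A y hy).t = false := rfl
@[simp] lemma one_a : (1 : Dic A y hy).a = 1 := rfl
@[simp] lemma inv_t (g : Dic A y hy) : g⁻¹.t = g.t := rfl
@[simp] lemma inv_a (g : Dic A y hy) : g⁻¹.a = if g.t then y * g.a else g.a⁻¹ := rfl

instance : Group (Dic A y hy) where
  mul_assoc g₁ g₂ g₃ := by
    have hyi : y⁻¹ = y := inv_eq_of_mul_eq_one_right hy
    ext
    · cases g₁.t <;> cases g₂.t <;> cases g₃.t <;> simp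
    · cases h₁ : g₁.t <;> cases h₂ : g₂.t <;> cases h₃ : g₃.t <;>
        simp [h₁, h₂, h₃, hyi, mul_inv_rev, mul_comm, mul_assoc, mul_left_comm]
  one_mul g := by ext <;> simp
  mul_one g := by ext <;> simp
  inv_mul_cancel g := by
    ext
    · simp
    · cases h : g.t <;> simp [h, mul_inv_rev, mul_comm, mul_assoc, mul_left_comm]

/-- The canonical embedding of `A` into `Dic A y hy`. -/
def ofA (a : A) : Dic A y hy := ⟨false, a⟩

/-- The extra generator `x` of `Dic A y hy`, satisfying `x ^ 2 = y`. -/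
def x (A : Type*) [CommGroup A] (y : A) (hy : y * y = 1) : Dic A y hy := ⟨true, 1⟩

instance [Fintype A] : Fintype (Dic A y hy) :=
  Fintype.ofEquiv (Bool × A)
    { toFun := fun p => ⟨p.1, p.2⟩
      invFun := fun g => (g.t, g.a)
      left_inv := fun _ => rfl
      right_inv := fun _ => rfl }

end Dic

/-- The Cayley graph of a group `G` with respect to a connection set `S`.  When `1 ∉ S` and
`S⁻¹ = S`, two vertices `g h` are adjacent if and only if `g⁻¹ * h ∈ S`. -/
def cayley {G : Type*} [Group G] (S : Set G) : SimpleGraph G :=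
  SimpleGraph.fromRel fun g h => g⁻¹ * h ∈ S

/-- A graph on a finite vertex set is integral if all eigenvalues of its adjacency matrix
are integers. -/
noncomputable def IsIntegralGraph {V : Type*} [Fintype V] (Γ : SimpleGraph V) : Prop :=
  ∀ μ ∈ spectrum ℝ (Γ.adjMatrix ℝ), ∃ k : ℤ, (k : ℝ) = μ

/-- The distance matrix of a graph on a finite vertex set. -/
noncomputable def distMatrix {V : Type*} [Fintype V] (Γ : SimpleGraph V) : Matrix V V ℝ :=
  Matrix.of fun v w => (Γ.dist v w : ℝ)

/-- A (connected) graph on a finite vertex set is distance integral if all eigenvalues of its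
distance matrix are integers. -/
noncomputable def IsDistanceIntegral {V : Type*} [Fintype V] (Γ : SimpleGraph V) : Prop :=
  ∀ μ ∈ spectrum ℝ (distMatrix Γ), ∃ k : ℤ, (k : ℝ) = μ

/-- The Boolean algebra `B(A)` of a group `A`: the collection of subsets of `A` generated by
the subgroups of `A` under finite intersections, unions, and complements. -/
inductive InBoolAlg (A : Type*) [Group A] : Set A → Prop
  | subgroup (H : Subgroup A) : InBoolAlg A (H : Set A)
  | compl {s : Set A} : InBoolAlg A s → InBoolAlg A sᶜ
  | union {s t : Set A} : InBoolAlg A s → InBoolAlg A t → InBoolAlg A (s ∪ t)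
  | inter {s t : Set A} : InBoolAlg A s → InBoolAlg A t → InBoolAlg A (s ∩ t)

/-- `mulPow S n = S^(n)`, the set of products of `n` elements of `S` (`S^(0) = {1}`). -/
def mulPow {G : Type*} [Monoid G] (S : Set G) (n : ℕ) : Set G :=
  {g | ∃ l : List G, l.length = n ∧ (∀ u ∈ l, u ∈ S) ∧ l.prod = g}

/-- `wordLen S g = ℓ_S(g)`: `0` if `g = 1`, and otherwise the least `n ≥ 1` such that `g` is a
product of `n` elements of `S`. -/
noncomputable def wordLen {G : Type*} [Group G] (S : Set G) (g : G) : ℕ :=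
  if g = 1 then 0 else sInf {n : ℕ | g ∈ mulPow S n}

/-- The distance power `Γ^D`: two distinct vertices are adjacent iff their distance in `Γ`
belongs to `D`. -/
def distPower {V : Type*} (Γ : SimpleGraph V) (D : Finset ℕ) : SimpleGraph V where
  Adj v w := v ≠ w ∧ Γ.dist v w ∈ D
  symm := ⟨fun v w h => ⟨h.1.symm, by rw [SimpleGraph.dist_comm]; exact h.2⟩⟩
  loopless := ⟨fun v h => h.1 rfl⟩

/-- A multiset `(A, f)` lies in `C(A)` iff `f` is constant on each atom
`[a] = {b : ⟨b⟩ = ⟨a⟩}`. -/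
def InCA {A : Type*} [Group A] (f : A → ℕ) : Prop :=
  ∀ a b : A, Subgroup.zpowers a = Subgroup.zpowers b → f a = f b

/-- The two-dimensional representation `R_π` of `Dic A y hy` induced by a one-dimensional
representation `π` of `A`:  `R_π(x) = [[0, π y], [1, 0]]` and `R_π(a) = diag(π a, π a⁻¹)`. -/
noncomputable def Rpi {A : Type*} [CommGroup A] {y : A} {hy : y * y = 1}
    (π : A →* ℂ) (g : Dic A y hy) : Matrix (Fin 2) (Fin 2) ℂ :=
  (if g.t then !![0, π y; 1, 0] else 1) * !![π g.a, 0; 0, π g.a⁻¹]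

/-- The complex-conjugate of a one-dimensional representation. -/
def conjHom {A : Type*} [CommGroup A] (π : A →* ℂ) : A →* ℂ :=
  (starRingEnd ℂ).toMonoidHom.comp π


/-!
For a character `χ : A →* ℂˣ` write `χ(T) = ∑_{a ∈ T} χ a`. Since `S⁻¹ = S` forces `S₁⁻¹ = S₁`
and `y • S₂ = S₂`, for `S₂⁻¹ = S₂` the function `x^t a ↦ ε^t χ(a)^{(-1)^t}` (`ε = ±1`) is an
eigenvector of `Cay(Dic(A,y), S)` with eigenvalue `χ(S₁) + ε χ(S₂)`. These `2|A|` eigenvectors span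
all functions on `Dic(A,y)`, so the eigenvalues are exactly the numbers `χ(S₁) ± χ(S₂)`.

A set lies in `B(A)` iff it is a union of atoms `{b | ⟨b⟩ = ⟨a⟩}`. For such a set `T`, every
`χ(T)` is an integer: `χ(H) ∈ {0, |H|}` for a subgroup `H`, and an atom is a cyclic subgroup minus
smaller atoms. Conversely, if every `χ(T)` is rational, Fourier inversion writes `1_T(a)` as a
rational combination of the roots of unity `χ(a⁻¹)`. The automorphism `ζ ↦ ζ^k` of `ℚ(ζ)` then
gives `1_T(a) = 1_T(a^k)` for `k` prime to the order of `a`, so `T` is a union of atoms. Finally,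
integrality of `χ(S₁) ± χ(S₂)` makes `χ(S₁)` and `χ(S₂)` half-integers.
-/

section BooleanAlgebra

variable {G : Type*} [Group G]

def AtomInvariant (S : Set G) : Prop :=
  ∀ a b : G, Subgroup.zpowers a = Subgroup.zpowers b → (a ∈ S ↔ b ∈ S)

theorem InBoolAlg.atomInvariant {S : Set G} (h : InBoolAlg G S) : AtomInvariant S := by
  induction h with
  | subgroup H => intro a b hab; simp only [SetLike.mem_coe, ← Subgroup.zpowers_le, hab]
  | compl _ ih => exact fun a b hab => (ih a b hab).not
  | union _ _ ih₁ ih₂ => exact fun a b hab => or_congr (ih₁ a b hab) (ih₂ a b hab)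
  | inter _ _ ih₁ ih₂ => exact fun a b hab => and_congr (ih₁ a b hab) (ih₂ a b hab)

theorem AtomInvariant.inv_eq {S : Set G} (h : AtomInvariant S) : S⁻¹ = S :=
  Set.ext fun a => h a⁻¹ a Subgroup.zpowers_inv

theorem InBoolAlg.biUnion {ι : Type*} (t : Finset ι) {f : ι → Set G}
    (hf : ∀ i ∈ t, InBoolAlg G (f i)) : InBoolAlg G (⋃ i ∈ t, f i) := by
  induction t using Finset.induction with
  | empty => simpa using (InBoolAlg.subgroup (⊤ : Subgroup G)).compl
  | insert i t _ ih =>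
    rw [Finset.set_biUnion_insert]
    exact (hf i (t.mem_insert_self i)).union (ih fun j hj => hf j (Finset.mem_insert_of_mem hj))

variable [Finite G]

theorem inBoolAlg_setOf_zpowers_eq (a : G) :
    InBoolAlg G {b | Subgroup.zpowers b = Subgroup.zpowers a} := by
  have := Fintype.ofFinite G
  have hatom : {b | Subgroup.zpowers b = Subgroup.zpowers a} =
      (Subgroup.zpowers a : Set G) ∩
        (⋃ c ∈ Finset.univ.filter (Subgroup.zpowers · < Subgroup.zpowers a),
          (Subgroup.zpowers c : Set G))ᶜ := by
    ext b
    simp only [Set.mem_ofPred_eq, Set.mem_inter_iff, Set.mem_compl_iff, Set.mem_iUnion,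
      Finset.mem_filter, Finset.mem_univ, true_and, SetLike.mem_coe, not_exists,
      ← Subgroup.zpowers_le]
    refine ⟨fun hb => ⟨hb.le, fun c hc hbc => (hbc.trans_lt (hb ▸ hc)).ne rfl⟩, ?_⟩
    rintro ⟨hba, hmin⟩
    exact hba.eq_of_not_lt fun hlt => hmin b hlt le_rfl
  rw [hatom]
  exact (InBoolAlg.subgroup _).inter
    (InBoolAlg.biUnion _ fun c _ => InBoolAlg.subgroup _).compl

theorem AtomInvariant.inBoolAlg {S : Set G} (h : AtomInvariant S) : InBoolAlg G S := by
  have := Fintype.ofFinite G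
  have hS : S = ⋃ a ∈ Finset.univ.filter (· ∈ S),
      {b | Subgroup.zpowers b = Subgroup.zpowers a} := by
    ext b
    simp only [Set.mem_iUnion, Set.mem_ofPred_eq, Finset.mem_filter, Finset.mem_univ, true_and,
      exists_prop]
    exact ⟨fun hb => ⟨b, hb, rfl⟩, fun ⟨a, ha, hba⟩ => (h b a hba).2 ha⟩
  rw [hS]
  exact InBoolAlg.biUnion _ fun a _ => inBoolAlg_setOf_zpowers_eq a

end BooleanAlgebra

theorem exists_coprime_pow_eq_of_zpowers_eq {G : Type*} [Group G] [Finite G] {a b : G}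
    (h : Subgroup.zpowers a = Subgroup.zpowers b) : ∃ k, k.Coprime (orderOf a) ∧ a ^ k = b := by
  obtain ⟨k, rfl⟩ := mem_powers_iff_mem_zpowers.2 (h ▸ Subgroup.mem_zpowers b)
  refine ⟨k, ?_, rfl⟩
  have horder : orderOf (a ^ k) = orderOf a := by
    rw [← Nat.card_zpowers, ← h, Nat.card_zpowers]
  rw [orderOf_pow, Nat.div_eq_self] at horder
  exact Nat.coprime_comm.1 (horder.resolve_left (orderOf_pos a).ne')

theorem IsPrimitiveRoot.aeval_pow_eq_zero_of_coprime {K : Type*} [Field K] [CharZero K]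
    {ζ : K} {n k : ℕ} (hζ : IsPrimitiveRoot ζ n) (hn : 0 < n) (hk : k.Coprime n)
    {P : Polynomial ℚ} (hP : Polynomial.aeval ζ P = 0) : Polynomial.aeval (ζ ^ k) P = 0 := by
  rw [← minpoly.dvd_iff, ← Polynomial.cyclotomic_eq_minpoly_rat (hζ.pow_of_coprime k hk) hn,
    Polynomial.cyclotomic_eq_minpoly_rat hζ hn, minpoly.dvd_iff]
  exact hP

open Polynomial in
theorem sum_ratCast_mul_pow_eq_of_coprime {K ι : Type*} [Field K] [CharZero K]
    {ζ : K} {n k : ℕ} (hζ : IsPrimitiveRoot ζ n) (hn : 0 < n) (hk : k.Coprime n)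
    (s : Finset ι) (c : ι → ℚ) {z : ι → K} (hz : ∀ i ∈ s, z i ^ n = 1) {q : ℚ}
    (h : ∑ i ∈ s, (c i : K) * z i = q) : ∑ i ∈ s, (c i : K) * z i ^ k = q := by
  have : NeZero n := ⟨hn.ne'⟩
  choose! e he using fun i hi => hζ.eq_pow_of_pow_eq_one (hz i hi)
  set P : ℚ[X] := ∑ i ∈ s, C (c i) * X ^ e i - C q
  have hP : aeval ζ P = 0 := by
    simp only [P, map_sub, map_sum, map_mul, aeval_C, aeval_X_pow, eq_ratCast]
    rw [← h, sub_eq_zero]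
    exact Finset.sum_congr rfl fun i hi => by rw [(he i hi).2]
  have hPk := hζ.aeval_pow_eq_zero_of_coprime hn hk hP
  simp only [P, map_sub, map_sum, map_mul, aeval_C, aeval_X_pow, eq_ratCast, sub_eq_zero]
    at hPk
  rw [← hPk]
  exact Finset.sum_congr rfl fun i hi => by rw [← (he i hi).2, ← pow_mul, ← pow_mul, Nat.mul_comm]

theorem Complex.exists_rat_eq_of_add_mem_bot_of_sub_mem_bot {a b : ℂ}
    (hadd : a + b ∈ (⊥ : Subring ℂ)) (hsub : a - b ∈ (⊥ : Subring ℂ)) :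
    (∃ q : ℚ, a = q) ∧ ∃ q : ℚ, b = q := by
  obtain ⟨m, hm⟩ := Subring.mem_bot.1 hadd
  obtain ⟨n, hn⟩ := Subring.mem_bot.1 hsub
  exact ⟨⟨(m + n) / 2, by push_cast; linear_combination (-hm - hn) / 2⟩,
    ⟨(m - n) / 2, by push_cast; linear_combination (hn - hm) / 2⟩⟩

section CharacterSums

variable {A : Type*} [CommGroup A] [Fintype A]

noncomputable def charSum (χ : A →* ℂˣ) (T : Set A) : ℂ :=
  ∑ a ∈ Finset.univ.filter (· ∈ T), (χ a : ℂ)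

theorem charSum_eq_sum_ite (χ : A →* ℂˣ) (T : Set A) :
    charSum χ T = ∑ a, if a ∈ T then (χ a : ℂ) else 0 :=
  Finset.sum_filter _ _

theorem charSum_smul (χ : A →* ℂˣ) (c : A) (T : Set A) :
    charSum χ (c • T) = χ c * charSum χ T := by
  simp only [charSum_eq_sum_ite, Finset.mul_sum, Set.mem_smul_set_iff_inv_smul_mem, smul_eq_mul]
  refine Fintype.sum_equiv (Equiv.mulLeft c⁻¹) _ _ fun a => ?_
  simp

theorem charSum_eq_sum_ite_inv {T : Set A} (hT : T⁻¹ = T) (χ : A →* ℂˣ) :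
    charSum χ T = ∑ a, if a ∈ T then (χ a : ℂ)⁻¹ else 0 := by
  conv_lhs => rw [← hT]
  rw [charSum_eq_sum_ite]
  exact Fintype.sum_equiv (Equiv.inv A) _ _ fun a => by simp

theorem charSum_subgroup_mem_bot (χ : A →* ℂˣ) (H : Subgroup A) :
    charSum χ H ∈ (⊥ : Subring ℂ) := by
  have hsum : charSum χ H = ∑ h : H, ((Units.coeHom ℂ).comp (χ.comp H.subtype)) h := by
    rw [charSum]
    exact Finset.sum_subtype _ (by simp) _
  rw [hsum, sum_hom_units]
  split_ifs <;> exact natCast_mem _ _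

theorem AtomInvariant.charSum_eq_sum {T : Set A} (hT : AtomInvariant T) (χ : A →* ℂˣ) :
    charSum χ T = ∑ K ∈ (Finset.univ.filter (· ∈ T)).image Subgroup.zpowers,
      charSum χ {b | Subgroup.zpowers b = K} := by
  rw [charSum, ← Finset.sum_fiberwise_of_maps_to (g := Subgroup.zpowers)
    fun _ => Finset.mem_image_of_mem _]
  refine Finset.sum_congr rfl fun K hK => ?_
  obtain ⟨c, hc, rfl⟩ := Finset.mem_image.1 hK
  rw [charSum, Finset.filter_filter]
  refine Finset.sum_congr (Finset.filter_congr fun b _ => ?_) fun _ _ => rfl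
  rw [Finset.mem_filter] at hc
  exact ⟨And.right, fun hb => ⟨(hT b c hb).2 hc.2, hb⟩⟩

theorem charSum_setOf_zpowers_eq_mem_bot (χ : A →* ℂˣ) (a : A) :
    charSum χ {b | Subgroup.zpowers b = Subgroup.zpowers a} ∈ (⊥ : Subring ℂ) := by
  have hwf : WellFounded fun b c : A => Subgroup.zpowers b < Subgroup.zpowers c :=
    InvImage.wf _ wellFounded_lt
  induction a using hwf.induction with | h a ih
  have hdecomp := (InBoolAlg.subgroup (Subgroup.zpowers a)).atomInvariant.charSum_eq_sum χ
  have hself : Subgroup.zpowers a ∈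
      (Finset.univ.filter (· ∈ (Subgroup.zpowers a : Set A))).image Subgroup.zpowers :=
    Finset.mem_image_of_mem _ (by simp)
  rw [← Finset.add_sum_erase _ _ hself] at hdecomp
  rw [eq_sub_of_add_eq hdecomp.symm]
  refine sub_mem (charSum_subgroup_mem_bot χ _) (sum_mem fun K hK => ?_)
  obtain ⟨hKa, hK⟩ := Finset.mem_erase.1 hK
  obtain ⟨c, hc, rfl⟩ := Finset.mem_image.1 hK
  simp only [Finset.mem_filter, Finset.mem_univ, true_and, SetLike.mem_coe] at hc
  exact ih c ((Subgroup.zpowers_le.2 hc).lt_of_ne hKa)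

theorem AtomInvariant.charSum_mem_bot {T : Set A} (hT : AtomInvariant T) (χ : A →* ℂˣ) :
    charSum χ T ∈ (⊥ : Subring ℂ) := by
  rw [hT.charSum_eq_sum χ]
  refine sum_mem fun K hK => ?_
  obtain ⟨c, -, rfl⟩ := Finset.mem_image.1 hK
  exact charSum_setOf_zpowers_eq_mem_bot χ c

noncomputable instance : Fintype (A →* ℂˣ) := Fintype.ofFinite _

theorem card_monoidHom_units_complex : Fintype.card (A →* ℂˣ) = Fintype.card A := by
  simpa [Nat.card_eq_fintype_card] using CommGroup.card_monoidHom_of_hasEnoughRootsOfUnity A ℂ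

theorem sum_monoidHom_apply (a : A) :
    ∑ χ : A →* ℂˣ, (χ a : ℂ) = if a = 1 then (Fintype.card A : ℂ) else 0 := by
  have hsum := sum_hom_units ((Units.coeHom ℂ).comp (MonoidHom.eval a : (A →* ℂˣ) →* ℂˣ))
  have hone : (Units.coeHom ℂ).comp (MonoidHom.eval a : (A →* ℂˣ) →* ℂˣ) = 1 ↔ a = 1 := by
    rw [← CommGroup.forall_apply_eq_apply_iff A (M := ℂ), DFunLike.ext_iff]
    simp only [MonoidHom.coe_comp, Function.comp_apply, Units.coeHom_apply, MonoidHom.one_apply,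
      map_one, Units.val_eq_one]
    rfl
  simpa [hone, card_monoidHom_units_complex] using hsum

theorem sum_charSum_mul_apply_inv (T : Set A) (a : A) :
    ∑ χ : A →* ℂˣ, charSum χ T * (χ a⁻¹ : ℂ) = if a ∈ T then (Fintype.card A : ℂ) else 0 := by
  simp_rw [charSum, Finset.sum_mul, ← Units.val_mul, ← map_mul]
  rw [Finset.sum_comm]
  simp_rw [sum_monoidHom_apply, mul_inv_eq_one]
  simp

theorem atomInvariant_of_forall_charSum_rat {T : Set A}
    (hT : ∀ χ : A →* ℂˣ, ∃ q : ℚ, charSum χ T = q) : AtomInvariant T := by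
  suffices ∀ a b : A, Subgroup.zpowers a = Subgroup.zpowers b → a ∈ T → b ∈ T from
    fun a b h => ⟨this a b h, this b a h.symm⟩
  intro a b hab ha
  obtain ⟨k, hk, rfl⟩ := exists_coprime_pow_eq_of_zpowers_eq hab
  choose q hq using hT
  have hn := orderOf_pos a
  have hfourier := sum_charSum_mul_apply_inv T a
  rw [if_pos ha] at hfourier
  simp_rw [hq] at hfourier
  have hgalois := sum_ratCast_mul_pow_eq_of_coprime (Complex.isPrimitiveRoot_exp _ hn.ne') hn hk
    Finset.univ q (z := fun χ => (χ a⁻¹ : ℂ))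
    (fun χ _ => by rw [← Units.val_pow_eq_pow_val, ← map_pow, inv_pow, pow_orderOf_eq_one,
      inv_one, map_one, Units.val_one])
    (q := Fintype.card A) (by exact_mod_cast hfourier)
  have hfourier' := sum_charSum_mul_apply_inv T (a ^ k)
  simp_rw [hq, ← inv_pow, map_pow, Units.val_pow_eq_pow_val] at hfourier'
  rw [hgalois] at hfourier'
  by_contra hb
  rw [if_neg hb] at hfourier'
  exact Fintype.card_ne_zero (by exact_mod_cast hfourier')

theorem span_range_coe_monoidHom :
    Submodule.span ℂ (Set.range fun (χ : A →* ℂˣ) (a : A) => (χ a : ℂ)) = ⊤ := by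
  have hind : LinearIndependent ℂ fun (χ : A →* ℂˣ) (a : A) => (χ a : ℂ) :=
    (linearIndependent_monoidHom A ℂ).comp (fun χ => (Units.coeHom ℂ).comp χ)
      fun χ χ' h => MonoidHom.ext fun a => Units.ext (DFunLike.congr_fun h a)
  refine hind.span_eq_top_of_card_eq_finrank ?_
  rw [Module.finrank_fintype_fun_eq_card, card_monoidHom_units_complex]

end CharacterSums

namespace Matrix

variable {n K : Type*} [Fintype n] [DecidableEq n] [Field K]

theorem mem_spectrum_iff_exists_of_span_eigenvectors {ι : Type*} {M : Matrix n n K}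
    {v : ι → n → K} {eig : ι → K} (hMv : ∀ i, M *ᵥ v i = eig i • v i) (hv : ∀ i, v i ≠ 0)
    (hspan : Submodule.span K (Set.range v) = ⊤) {μ : K} :
    μ ∈ spectrum K M ↔ ∃ i, eig i = μ := by
  have hshift : ∀ i, (algebraMap K (Matrix n n K) μ - M) *ᵥ v i = (μ - eig i) • v i := fun i => by
    rw [sub_mulVec, Algebra.algebraMap_eq_smul_one, smul_mulVec, one_mulVec, hMv, sub_smul]
  rw [spectrum.mem_iff, ← mulVec_surjective_iff_isUnit]
  constructor
  · intro hsurj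
    by_contra! hne
    refine hsurj ((LinearMap.range_eq_top (f := mulVecLin _)).1
      (eq_top_iff.2 (hspan ▸ Submodule.span_le.2 ?_)))
    rintro _ ⟨i, rfl⟩
    refine ⟨(μ - eig i)⁻¹ • v i, ?_⟩
    rw [mulVecLin_apply, mulVec_smul, hshift, smul_smul,
      inv_mul_cancel₀ (sub_ne_zero.2 (hne i).symm), one_smul]
  · rintro ⟨i, rfl⟩ hsurj
    rw [mulVec_surjective_iff_isUnit, ← mulVec_injective_iff_isUnit] at hsurj
    exact hv i (hsurj (by rw [hshift, sub_self, zero_smul, mulVec_zero]))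

theorem algebraMap_mem_spectrum_map_iff {L : Type*} [Field L] [Algebra K L]
    (M : Matrix n n K) (μ : K) :
    algebraMap K L μ ∈ spectrum L (M.map (algebraMap K L)) ↔ μ ∈ spectrum K M := by
  have hmap : algebraMap L (Matrix n n L) (algebraMap K L μ) - M.map (algebraMap K L) =
      (algebraMap K L).mapMatrix (algebraMap K (Matrix n n K) μ - M) := by
    ext i j
    simp [algebraMap_matrix_apply, apply_ite (algebraMap K L)]
  rw [spectrum.mem_iff, spectrum.mem_iff, hmap, isUnit_iff_isUnit_det, isUnit_iff_isUnit_det,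
    ← RingHom.map_det, isUnit_iff_ne_zero, isUnit_iff_ne_zero, map_ne_zero]

end Matrix

theorem SimpleGraph.map_adjMatrix {V α β : Type*} (G : SimpleGraph V) [DecidableRel G.Adj]
    [NonAssocSemiring α] [NonAssocSemiring β] (f : α →+* β) :
    (G.adjMatrix α).map f = G.adjMatrix β := by
  ext v w
  simp [SimpleGraph.adjMatrix_apply, apply_ite f]

theorem isIntegralGraph_iff_forall_mem_spectrum_complex {V : Type*} [Fintype V]
    (Γ : SimpleGraph V) :
    IsIntegralGraph Γ ↔ ∀ z ∈ spectrum ℂ (Γ.adjMatrix ℂ), z ∈ (⊥ : Subring ℂ) := by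
  have hreal (μ : ℝ) : (μ : ℂ) ∈ spectrum ℂ (Γ.adjMatrix ℂ) ↔ μ ∈ spectrum ℝ (Γ.adjMatrix ℝ) := by
    rw [← Γ.map_adjMatrix (algebraMap ℝ ℂ)]
    exact Matrix.algebraMap_mem_spectrum_map_iff _ μ
  refine ⟨fun hint z hz => ?_, fun h μ hμ => ?_⟩
  · obtain ⟨μ, -, rfl⟩ := (Γ.isHermitian_adjMatrix ℂ).spectrum_eq_image_range ▸ hz
    obtain ⟨k, hk⟩ := hint μ ((hreal μ).1 hz)
    exact Subring.mem_bot.2 ⟨k, by simp [← hk]⟩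
  · obtain ⟨k, hk⟩ := Subring.mem_bot.1 (h _ ((hreal μ).2 hμ))
    exact ⟨k, by exact_mod_cast hk⟩

section Cayley

variable {G : Type*} [Group G] {S : Set G}

theorem cayley_adj_iff (h1S : (1 : G) ∉ S) (hSinv : S⁻¹ = S) {g h : G} :
    (cayley S).Adj g h ↔ g⁻¹ * h ∈ S := by
  rw [cayley, SimpleGraph.fromRel_adj]
  refine ⟨fun ⟨_, hgh⟩ => hgh.elim id fun hhg => ?_, fun hgh => ⟨?_, Or.inl hgh⟩⟩
  · rwa [← hSinv, Set.mem_inv, mul_inv_rev, inv_inv]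
  · rintro rfl
    exact h1S (by rwa [inv_mul_cancel] at hgh)

open Matrix in
theorem cayley_adjMatrix_mulVec_apply [Fintype G] {R : Type*} [NonAssocSemiring R]
    (h1S : (1 : G) ∉ S) (hSinv : S⁻¹ = S) (v : G → R) (g : G) :
    ((cayley S).adjMatrix R *ᵥ v) g = ∑ s, if s ∈ S then v (g * s) else 0 := by
  rw [mulVec, dotProduct]
  refine (Fintype.sum_equiv (Equiv.mulLeft g) _ _ fun s => ?_).symm
  simp [SimpleGraph.adjMatrix_apply, cayley_adj_iff h1S hSinv]

end Cayley

namespace Dic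

section

variable {A : Type*} [CommGroup A] {y : A} {hy : y * y = 1}

def connSet (S₁ S₂ : Set A) : Set (Dic A y hy) := {g | g.a ∈ if g.t then S₂ else S₁}

@[simp] theorem mem_connSet {S₁ S₂ : Set A} {g : Dic A y hy} :
    g ∈ connSet S₁ S₂ ↔ g.a ∈ if g.t then S₂ else S₁ := Iff.rfl

theorem image_ofA_union_image_x_mul_ofA (S₁ S₂ : Set A) :
    ofA '' S₁ ∪ (fun a => x A y hy * ofA a) '' S₂ = connSet S₁ S₂ := by
  ext ⟨t, a⟩
  cases t <;> simp [ofA, x, Dic.ext_iff]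

theorem inv_connSet (S₁ S₂ : Set A) :
    (connSet S₁ S₂ : Set (Dic A y hy))⁻¹ = connSet S₁⁻¹ (y • S₂) := by
  have hyinv : y⁻¹ = y := inv_eq_of_mul_eq_one_right hy
  ext ⟨t, a⟩
  cases t <;> simp [Set.mem_smul_set_iff_inv_smul_mem, hyinv]

theorem connSet_inj {S₁ S₂ T₁ T₂ : Set A} :
    (connSet S₁ S₂ : Set (Dic A y hy)) = connSet T₁ T₂ ↔ S₁ = T₁ ∧ S₂ = T₂ := by
  refine ⟨fun h => ⟨?_, ?_⟩, fun ⟨h₁, h₂⟩ => h₁ ▸ h₂ ▸ rfl⟩ <;> ext a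
  · simpa using Set.ext_iff.1 h ⟨false, a⟩
  · simpa using Set.ext_iff.1 h ⟨true, a⟩

noncomputable def charVec (χ : A →* ℂˣ) (ε : ℂ) : Dic A y hy → ℂ :=
  fun g => if g.t then ε * (χ g.a : ℂ)⁻¹ else χ g.a

theorem charVec_ne_zero (χ : A →* ℂˣ) (ε : ℂ) : (charVec χ ε : Dic A y hy → ℂ) ≠ 0 :=
  fun h => by simpa [charVec] using congr_fun h 1

noncomputable def extendCoset (t : Bool) : (A → ℂ) →ₗ[ℂ] (Dic A y hy → ℂ) :=
  LinearMap.pi fun g => if g.t = t then LinearMap.proj g.a else 0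

theorem extendCoset_apply (t : Bool) (w : A → ℂ) (g : Dic A y hy) :
    extendCoset t w g = if g.t = t then w g.a else 0 := by
  rw [extendCoset, LinearMap.pi_apply]
  split_ifs <;> rfl

end

variable {A : Type*} [CommGroup A] [Fintype A] {y : A} {hy : y * y = 1} {S₁ S₂ : Set A}

theorem sum_eq_sum_add_sum {M : Type*} [AddCommMonoid M] (f : Dic A y hy → M) :
    ∑ g, f g = ∑ a, f ⟨false, a⟩ + ∑ a, f ⟨true, a⟩ := by
  let e : Bool × A ≃ Dic A y hy :=
    ⟨fun p => ⟨p.1, p.2⟩, fun g => (g.t, g.a), fun _ => rfl, fun _ => rfl⟩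
  rw [← e.sum_comp, Fintype.sum_prod_type, Fintype.sum_bool, add_comm]
  rfl

open Matrix in
theorem adjMatrix_mulVec_charVec (h1S : (1 : Dic A y hy) ∉ connSet S₁ S₂)
    (hSinv : (connSet S₁ S₂ : Set (Dic A y hy))⁻¹ = connSet S₁ S₂) (hS₂ : S₂⁻¹ = S₂)
    (χ : A →* ℂˣ) {ε : ℂ} (hε : ε * ε = 1) :
    (cayley (connSet S₁ S₂)).adjMatrix ℂ *ᵥ charVec χ ε =
      (charSum χ S₁ + ε * charSum χ S₂) • charVec (hy := hy) χ ε := by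
  obtain ⟨hS₁, hyS₂⟩ := connSet_inj.1 ((inv_connSet S₁ S₂).symm.trans hSinv)
  have hy₂ : charSum χ S₂ = χ y * charSum χ S₂ := by rw [← charSum_smul, hyS₂]
  funext ⟨t, b⟩
  rw [cayley_adjMatrix_mulVec_apply h1S hSinv, sum_eq_sum_add_sum]
  cases t
  · simp only [mem_connSet, Bool.false_eq_true, ↓reduceIte, charVec, mul_t, bne_self_eq_false,
      mul_a, Bool.and_self, mul_one, map_mul, Units.val_mul, Bool.bne_true, Bool.not_false,
      Bool.and_true, map_inv, Units.val_inv_eq_inv_val, _root_.mul_inv_rev, inv_inv, Pi.smul_apply,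
      smul_eq_mul]
    rw [charSum_eq_sum_ite χ S₁, charSum_eq_sum_ite_inv hS₂]
    simp only [Finset.mul_sum, Finset.sum_mul, add_mul]
    congr 1 <;> refine Finset.sum_congr rfl fun a _ => ?_ <;> split_ifs <;> ring
  · simp only [mem_connSet, Bool.false_eq_true, ↓reduceIte, charVec, mul_t, Bool.bne_false, mul_a,
      Bool.and_false, mul_one, map_mul, Units.val_mul, _root_.mul_inv_rev, bne_self_eq_false,
      Bool.and_self, map_inv, Units.val_inv_eq_inv_val, Pi.smul_apply, smul_eq_mul]
    rw [charSum_eq_sum_ite_inv hS₁, hy₂, charSum_eq_sum_ite χ S₂]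
    simp only [Finset.mul_sum, Finset.sum_mul, add_mul]
    congr 1 <;> refine Finset.sum_congr rfl fun a _ => ?_ <;> split_ifs
    · ring
    · ring
    · linear_combination (-(χ b : ℂ)⁻¹ * χ a * χ y) * hε
    · ring

theorem span_range_charVec :
    Submodule.span ℂ (Set.range fun p : (A →* ℂˣ) × ℤˣ =>
      (charVec p.1 ((p.2 : ℤ) : ℂ) : Dic A y hy → ℂ)) = ⊤ := by
  set U := Submodule.span ℂ (Set.range fun p : (A →* ℂˣ) × ℤˣ =>
      (charVec p.1 ((p.2 : ℤ) : ℂ) : Dic A y hy → ℂ))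
  have hmem : ∀ (χ : A →* ℂˣ) (u : ℤˣ), charVec χ ((u : ℤ) : ℂ) ∈ U :=
    fun χ u => Submodule.subset_span ⟨(χ, u), rfl⟩
  have hrange : ∀ t, LinearMap.range (extendCoset (y := y) (hy := hy) t) ≤ U := by
    intro t
    rw [LinearMap.range_eq_map, ← span_range_coe_monoidHom, Submodule.map_span_le]
    rintro _ ⟨χ, rfl⟩
    cases t
    · convert U.smul_mem (2⁻¹ : ℂ) (U.add_mem (hmem χ 1) (hmem χ (-1))) using 1
      funext ⟨t, a⟩
      cases t <;> simp [extendCoset_apply, charVec, ← two_mul]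
    · convert U.smul_mem (2⁻¹ : ℂ) (U.sub_mem (hmem χ⁻¹ 1) (hmem χ⁻¹ (-1))) using 1
      funext ⟨t, a⟩
      cases t <;> simp [extendCoset_apply, charVec, ← two_mul]
  refine eq_top_iff.2 fun v _ => ?_
  have hv : v = extendCoset false (fun a => v ⟨false, a⟩) +
      extendCoset true (fun a => v ⟨true, a⟩) := by
    funext ⟨t, a⟩
    cases t <;> simp [extendCoset_apply]
  rw [hv]
  exact U.add_mem (hrange false ⟨_, rfl⟩) (hrange true ⟨_, rfl⟩)

theorem mem_spectrum_adjMatrix_cayley_connSet_iff (h1S : (1 : Dic A y hy) ∉ connSet S₁ S₂)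
    (hSinv : (connSet S₁ S₂ : Set (Dic A y hy))⁻¹ = connSet S₁ S₂) (hS₂ : S₂⁻¹ = S₂) {z : ℂ} :
    z ∈ spectrum ℂ ((cayley (connSet S₁ S₂ : Set (Dic A y hy))).adjMatrix ℂ) ↔
      ∃ χ : A →* ℂˣ, z = charSum χ S₁ + charSum χ S₂ ∨ z = charSum χ S₁ - charSum χ S₂ := by
  have heig (p : (A →* ℂˣ) × ℤˣ) := adjMatrix_mulVec_charVec h1S hSinv hS₂ p.1
    (ε := ((p.2 : ℤ) : ℂ)) (by rw [← Int.cast_mul, ← Units.val_mul, Int.units_mul_self]; simp)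
  rw [Matrix.mem_spectrum_iff_exists_of_span_eigenvectors heig (fun p => charVec_ne_zero p.1 _)
    span_range_charVec]
  constructor
  · rintro ⟨⟨χ, u⟩, rfl⟩
    rcases Int.units_eq_one_or u with rfl | rfl
    · exact ⟨χ, Or.inl (by simp)⟩
    · exact ⟨χ, Or.inr (by simp [sub_eq_add_neg])⟩
  · rintro ⟨χ, rfl | rfl⟩
    · exact ⟨(χ, 1), by simp⟩
    · exact ⟨(χ, -1), by simp [sub_eq_add_neg]⟩

end Dic

theorem cayley_dic_integral_boolean_iff_general {A : Type*} [CommGroup A] [Fintype A]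
    (y : A) (hy : y * y = 1)
    (S : Set (Dic A y hy)) (S₁ S₂ : Set A)
    (hS : S = Dic.ofA '' S₁ ∪ (fun a => Dic.x A y hy * Dic.ofA a) '' S₂)
    (h1S : (1 : Dic A y hy) ∉ S) (hSinv : S⁻¹ = S) :
    (InBoolAlg A S₁ ∧ InBoolAlg A S₂) ↔
      (IsIntegralGraph (cayley S) ∧ S₂⁻¹ = S₂) := by
  rw [Dic.image_ofA_union_image_x_mul_ofA] at hS
  subst hS
  have hspec (hS₂ : S₂⁻¹ = S₂) (z : ℂ) :=
    Dic.mem_spectrum_adjMatrix_cayley_connSet_iff h1S hSinv hS₂ (z := z)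
  rw [isIntegralGraph_iff_forall_mem_spectrum_complex]
  constructor
  · rintro ⟨hB₁, hB₂⟩
    have hS₂ := hB₂.atomInvariant.inv_eq
    refine ⟨fun z hz => ?_, hS₂⟩
    obtain ⟨χ, rfl | rfl⟩ := (hspec hS₂ z).1 hz
    · exact add_mem (hB₁.atomInvariant.charSum_mem_bot χ) (hB₂.atomInvariant.charSum_mem_bot χ)
    · exact sub_mem (hB₁.atomInvariant.charSum_mem_bot χ) (hB₂.atomInvariant.charSum_mem_bot χ)
  · rintro ⟨hint, hS₂⟩
    have hrat (χ : A →* ℂˣ) := Complex.exists_rat_eq_of_add_mem_bot_of_sub_mem_bot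
      (hint _ ((hspec hS₂ _).2 ⟨χ, Or.inl rfl⟩)) (hint _ ((hspec hS₂ _).2 ⟨χ, Or.inr rfl⟩))
    exact ⟨(atomInvariant_of_forall_charSum_rat fun χ => (hrat χ).1).inBoolAlg,
      (atomInvariant_of_forall_charSum_rat fun χ => (hrat χ).2).inBoolAlg⟩

/-- Corollary 3.5: for `S = S₁ ∪ xS₂ ⊆ Dic(A,y)` with `1 ∉ S`, `S⁻¹ = S`,
one has `S₁, S₂ ∈ B(A)` iff `Cay(Dic(A,y), S)` is integral and `S₂⁻¹ = S₂`. -/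
theorem cayley_dic_integral_boolean_iff {A : Type*} [CommGroup A] [Fintype A]
    (hA : Even (Fintype.card A)) (hexp : 3 ≤ Monoid.exponent A)
    (y : A) (hy : y * y = 1) (hy1 : y ≠ 1)
    (S : Set (Dic A y hy)) (S₁ S₂ : Set A)
    (hS : S = Dic.ofA '' S₁ ∪ (fun a => Dic.x A y hy * Dic.ofA a) '' S₂)
    (h1S : (1 : Dic A y hy) ∉ S) (hSinv : S⁻¹ = S) :
    (InBoolAlg A S₁ ∧ InBoolAlg A S₂) ↔
      (IsIntegralGraph (cayley S) ∧ S₂⁻¹ = S₂) :=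
  cayley_dic_integral_boolean_iff_general y hy S S₁ S₂ hS h1S hSinv
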